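/- Let E be a real inner product space and T : E → E a linear map which is symmetric, i.e. ⟪T x, y⟫ = ⟪x, T y⟫ for all x, y ∈ E, and nonnegative, i.e. ⟪T x, x⟫ ≥ 0 for all x ∈ E. Let m, α ∈ ℝ with m > 2, let k ≥ 1 be a natural number, and let v : ℕ → E satisfy: v k ≠ 0; v j = 0 for all j > k; and for every j, T (v j) = (α(α+m−2)) • v j + ((j+1)(2α+m−2)) • v (j+1) + ((j+1)(j+2)) • v (j+2). Then a contradiction follows (no such data exist). (This is the exact spectral reformulation of Proposition 2.4 of the paper: by the Laplacian computation of Lemma 2.3, a harmonic function u(σ,r) = Σ_{j=0}^{k} r^α (log r)^j v_j(σ) on the cone C′_Σ = Σ × (0,∞) of dimension m > 2, with k > 0 and v_k ≠ 0, would produce precisely such a chain of equations for the nonnegative symmetric operator T = Δ_Σ on Σ; hence no such harmonic function exists.) -/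
import Mathlib


open scoped RealInnerProductSpace

/-- Spectral reformulation of Proposition 2.4 of the paper: for a nonnegative symmetric
operator `T` on a real inner product space, with `m > 2`, there is no finite chain
`v_0, …, v_k` (`k ≥ 1`, `v_k ≠ 0`) satisfying
`T v_j = α(α+m-2) v_j + (j+1)(2α+m-2) v_{j+1} + (j+1)(j+2) v_{j+2}`.
Equivalently, there are no harmonic functions `Σ_j r^α (log r)^j v_j(σ)` with `k > 0`
on a cone of dimension `m > 2`. -/
theorem no_log_harmonic_chain {E : Type*} [NormedAddCommGroup E] [InnerProductSpace ℝ E]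
    (T : E →ₗ[ℝ] E) (hsym : ∀ x y : E, ⟪T x, y⟫ = ⟪x, T y⟫)
    (hpos : ∀ x : E, 0 ≤ ⟪T x, x⟫)
    (m α : ℝ) (hm : 2 < m) (k : ℕ) (hk : 1 ≤ k) (v : ℕ → E)
    (hvk : v k ≠ 0) (hvtop : ∀ j, k < j → v j = 0)
    (hchain : ∀ j : ℕ, T (v j) = (α * (α + m - 2)) • v j
        + (((j : ℝ) + 1) * (2 * α + m - 2)) • v (j + 1)
        + (((j : ℝ) + 1) * ((j : ℝ) + 2)) • v (j + 2)) :
    False := by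
  obtain ⟨n, rfl⟩ : ∃ n, k = n + 1 := ⟨k - 1, (Nat.succ_pred_eq_of_pos hk).symm⟩
  set lam : ℝ := α * (α + m - 2) with hlam
  have h1 : T (v (n + 1)) = lam • v (n + 1) := by
    have := hchain (n + 1)
    rw [hvtop (n + 1 + 1) (by omega), hvtop (n + 1 + 2) (by omega)] at this
    simpa using this
  have h2 : T (v n) = lam • v n + (((n : ℝ) + 1) * (2 * α + m - 2)) • v (n + 1) := by
    have := hchain n
    rw [hvtop (n + 2) (by omega)] at this
    simpa using this
  -- inner products
  have key : (((n : ℝ) + 1) * (2 * α + m - 2)) * ⟪v (n+1), v (n+1)⟫ = 0 := by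
    have e1 : ⟪T (v n), v (n+1)⟫ = lam * ⟪v n, v (n+1)⟫
        + (((n : ℝ) + 1) * (2 * α + m - 2)) * ⟪v (n+1), v (n+1)⟫ := by
      rw [h2, inner_add_left, real_inner_smul_left, real_inner_smul_left]
    have e2 : ⟪T (v n), v (n+1)⟫ = lam * ⟪v n, v (n+1)⟫ := by
      rw [hsym, h1, real_inner_smul_right]
    rw [e2] at e1
    linarith
  have hnz : ⟪v (n+1), v (n+1)⟫ ≠ 0 := by
    simpa [real_inner_self_eq_norm_sq] using
      pow_ne_zero 2 (norm_ne_zero_iff.mpr hvk)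
  have hb : 2 * α + m - 2 = 0 := by
    rcases mul_eq_zero.mp key with h | h
    · rcases mul_eq_zero.mp h with h' | h'
      · exfalso; have : (0:ℝ) ≤ (n:ℝ) := Nat.cast_nonneg n; linarith
      · exact h'
    · exact absurd h hnz
  have hpk : 0 ≤ lam * ⟪v (n+1), v (n+1)⟫ := by
    have := hpos (v (n+1))
    rwa [h1, real_inner_smul_left] at this
  have hlamneg : lam < 0 := by
    have hα : α = (2 - m) / 2 := by linarith
    have : lam = -α ^ 2 := by rw [hlam]; nlinarith
    rw [this, hα]
    nlinarith
  have hinnpos : 0 < ⟪v (n+1), v (n+1)⟫ :=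
    lt_of_le_of_ne (real_inner_self_nonneg) (Ne.symm hnz)
  nlinarith
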